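/- arXiv:2006.05498 — 3 statements merged into one kernel-verified Lean document; each statement's English description precedes it below -/
import Mathlib

section
/- Let A be an n×n rational matrix. Define φ₁(A) to be the 2n×2n matrix obtained by replacing each entry A_{ij} with the 2×2 block [[α_{ij}, β_{ij}],[β_{ij}, α_{ij}]] where α_{ij} = max(A_{ij}, 0) and β_{ij} = max(-A_{ij}, 0). Then for any row vector [α₁,...,αₙ] and any k ≥ 0, if [β₁,...,βₙ] = [α₁,...,αₙ]·Aᵏ, then [α₁,-α₁,α₂,-α₂,...,αₙ,-αₙ]·φ₁(A)ᵏ = [β₁,-β₁,β₂,-β₂,...,βₙ,-βₙ]. -/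
open Matrix

/-- The doubling map `φ₁`: each entry `A i j` is replaced by the 2×2 block
`[[max (A i j) 0, max (-(A i j)) 0], [max (-(A i j)) 0, max (A i j) 0]]`. -/
def phi1 {n : ℕ} (A : Matrix (Fin n) (Fin n) ℚ) :
    Matrix (Fin n × Fin 2) (Fin n × Fin 2) ℚ :=
  fun p q => if p.2 = q.2 then max (A p.1 q.1) 0 else max (-(A p.1 q.1)) 0

/-- The signed doubling of a row vector: `α i` is replaced by the pair `(α i, -α i)`. -/
def dblRow {n : ℕ} (α : Fin n → ℚ) : Fin n × Fin 2 → ℚ :=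
  fun p => if p.2 = 0 then α p.1 else -α p.1

lemma dblRow_vecMul_phi1 {n : ℕ} (A : Matrix (Fin n) (Fin n) ℚ) (α : Fin n → ℚ) :
    dblRow α ᵥ* phi1 A = dblRow (α ᵥ* A) := by
  funext q
  obtain ⟨j, t⟩ := q
  simp only [vecMul, dotProduct, dblRow, phi1]
  rw [Fintype.sum_prod_type, ]
  have key : ∀ i : Fin n, ∑ s : Fin 2,
      (if s = 0 then α i else -α i) *
        (if s = t then max (A i j) 0 else max (-(A i j)) 0)
      = if t = 0 then α i * A i j else -(α i * A i j) := by
    intro i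
    have hmax : max (A i j) 0 - max (-(A i j)) 0 = A i j := by
      rcases le_total (A i j) 0 with h | h
      · rw [max_eq_right h, max_eq_left (neg_nonneg.mpr h)]; ring
      · rw [max_eq_left h, max_eq_right (neg_nonpos.mpr h)]; ring
    fin_cases t <;> simp [Fin.sum_univ_two] <;> first | linear_combination α i * hmax | linear_combination -α i * hmax
  simp only [key]
  fin_cases t <;> simp [vecMul, dotProduct, Finset.mul_sum, Finset.sum_neg_distrib]

/-- If `β = α · Aᵏ`, then `[α₁,-α₁,…,αₙ,-αₙ] · φ₁(A)ᵏ = [β₁,-β₁,…,βₙ,-βₙ]`. -/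
theorem dblRow_vecMul_phi1_pow
    {n : ℕ} (A : Matrix (Fin n) (Fin n) ℚ) (α β : Fin n → ℚ) (k : ℕ)
    (hβ : β = α ᵥ* (A ^ k)) :
    dblRow α ᵥ* (phi1 A ^ k) = dblRow β := by
  subst hβ
  induction k with
  | zero => simp
  | succ k ih =>
    rw [pow_succ, pow_succ, ← vecMul_vecMul, ih, dblRow_vecMul_phi1, vecMul_vecMul]
end

section
/- Let A ∈ ℚ^{n×n}, X₀ ∈ ℚⁿ with X₀(1) = 0, and C = [1,0,...,0]. Then there exist positive rationals γ, λ, a rational matrix P of size (2n+1)×(2n+1) with non-negative off-diagonal entries and each row sum ≤ 0 (i.e. a sub-generator matrix), C' = [1,-1,0,...,0] of length 2n+1, and Y₀ = (0,...,0,1)ᵀ such that C·exp(A·t)·X₀ = γ·e^{λt}·(C'·exp(P·t)·Y₀) for all t ≥ 0. -/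
open Matrix NormedSpace

namespace ExistPAux

variable {n : ℕ}

/-- positive/negative part splitting matrix on doubled index set. -/
def QB (A : Matrix (Fin n) (Fin n) ℚ) : Matrix (Fin n × Bool) (Fin n × Bool) ℚ :=
  Matrix.of fun p q => if p.2 = q.2 then max (A p.1 q.1) 0 else max (-A p.1 q.1) 0

def w0 (X0 : Fin n → ℚ) : Fin n × Bool → ℚ :=
  fun p => if p.2 then max (-X0 p.1) 0 else max (X0 p.1) 0

lemma QB_nonneg (A : Matrix (Fin n) (Fin n) ℚ) (p q) : 0 ≤ QB A p q := by
  unfold QB; dsimp; split <;> exact le_max_right _ _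

lemma w0_nonneg (X0 : Fin n → ℚ) (p) : 0 ≤ w0 X0 p := by
  unfold w0; split <;> exact le_max_right _ _

lemma w0_diff (X0 : Fin n → ℚ) (i : Fin n) : w0 X0 (i, false) - w0 X0 (i, true) = X0 i := by
  simp [w0, max_zero_sub_max_neg_zero_eq_self]

lemma QB_diff (A : Matrix (Fin n) (Fin n) ℚ) (p : Fin n × Bool → ℚ) (i : Fin n) :
    (QB A *ᵥ p) (i, false) - (QB A *ᵥ p) (i, true)
      = (A *ᵥ fun j => p (j, false) - p (j, true)) i := by
  simp only [Matrix.mulVec, dotProduct, Fintype.sum_prod_type, Fintype.sum_bool, QB,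
    Matrix.of_apply]
  simp only [← Finset.sum_sub_distrib]
  refine Finset.sum_congr rfl fun j _ => ?_
  have h : max (A i j) 0 - max (-A i j) 0 = A i j := max_zero_sub_max_neg_zero_eq_self _
  simp only [Bool.false_eq_true, Bool.true_eq_false, if_true, if_false, reduceIte]
  linear_combination (p (j, false) - p (j, true)) * h


lemma QB_pow_diff (A : Matrix (Fin n) (Fin n) ℚ) (X0 : Fin n → ℚ) (k : ℕ) :
    (fun i => ((QB A) ^ k *ᵥ w0 X0) (i, false) - ((QB A) ^ k *ᵥ w0 X0) (i, true))
      = (A ^ k) *ᵥ X0 := by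
  induction k with
  | zero => funext i; simp [w0_diff]
  | succ k ih =>
      funext i
      rw [pow_succ', pow_succ', ← Matrix.mulVec_mulVec, ← Matrix.mulVec_mulVec]
      rw [QB_diff A ((QB A) ^ k *ᵥ w0 X0) i, ih]

/-- the augmented generator on the sum type -/
def Q0 (A : Matrix (Fin n) (Fin n) ℚ) (X0 : Fin n → ℚ) :
    Matrix ((Fin n × Bool) ⊕ Unit) ((Fin n × Bool) ⊕ Unit) ℚ :=
  Matrix.fromBlocks (QB A) (Matrix.of fun p _ => (QB A *ᵥ w0 X0) p) 0 0

lemma Q0_nonneg (A : Matrix (Fin n) (Fin n) ℚ) (X0 : Fin n → ℚ) (x y) :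
    0 ≤ Q0 A X0 x y := by
  rcases x with p | u <;> rcases y with q | v
  · simpa [Q0] using QB_nonneg A p q
  · simp only [Q0, Matrix.fromBlocks_apply₁₂, Matrix.of_apply, Matrix.mulVec,
      dotProduct]
    exact Finset.sum_nonneg fun j _ => mul_nonneg (QB_nonneg _ _ _) (w0_nonneg _ _)
  · simp [Q0]
  · simp [Q0]

lemma Q0_pow_mulVec (A : Matrix (Fin n) (Fin n) ℚ) (X0 : Fin n → ℚ) (k : ℕ) :
    (Q0 A X0) ^ (k + 1) *ᵥ Sum.elim 0 1
      = Sum.elim ((QB A) ^ (k + 1) *ᵥ w0 X0) 0 := by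
  induction k with
  | zero =>
      rw [pow_one]
      unfold Q0
      rw [Matrix.fromBlocks_mulVec]
      funext x
      rcases x with p | u <;>
        simp [Matrix.mulVec, dotProduct, pow_one]
  | succ k ih =>
      rw [pow_succ', ← Matrix.mulVec_mulVec, ih]
      unfold Q0
      rw [Matrix.fromBlocks_mulVec]
      funext x
      rcases x with p | u
      · simp [pow_succ', ← Matrix.mulVec_mulVec, Matrix.mulVec, dotProduct]
      · simp [Matrix.mulVec, dotProduct]

def cT [NeZero n] : ((Fin n × Bool) ⊕ Unit) → ℚ :=
  Sum.elim (fun p => if p = ((0 : Fin n), false) then 1 else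
    if p = ((0 : Fin n), true) then -1 else 0) 0

lemma dot_spike [NeZero n] (v : Fin n × Bool → ℚ) :
    (∑ p : Fin n × Bool, (if p = ((0 : Fin n), false) then (1:ℚ) else
      if p = ((0 : Fin n), true) then -1 else 0) * v p)
      = v (0, false) - v (0, true) := by
  have : ∀ p : Fin n × Bool,
      (if p = ((0 : Fin n), false) then (1:ℚ) else
        if p = ((0 : Fin n), true) then -1 else 0) * v p
      = (if p = ((0 : Fin n), false) then v p else 0)
        + (if p = ((0 : Fin n), true) then -v p else 0) := by
    intro p
    by_cases h1 : p = ((0 : Fin n), false)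
    · subst h1; simp
    · by_cases h2 : p = ((0 : Fin n), true) <;> simp [h1, h2]
  simp only [this, Finset.sum_add_distrib, Finset.sum_ite_eq' Finset.univ,
    Finset.mem_univ, if_true]
  ring

lemma keyT [NeZero n] (A : Matrix (Fin n) (Fin n) ℚ) (X0 : Fin n → ℚ) (hX0 : X0 0 = 0)
    (k : ℕ) :
    cT ⬝ᵥ ((Q0 A X0) ^ k *ᵥ Sum.elim 0 1) = ((A ^ k) *ᵥ X0) 0 := by
  cases k with
  | zero =>
      simp only [pow_zero, Matrix.one_mulVec]
      simp [dotProduct, Fintype.sum_sum_type, cT, hX0]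
  | succ k =>
      rw [Q0_pow_mulVec]
      simp only [dotProduct, Fintype.sum_sum_type, cT]
      simp only [Sum.elim_inl, Sum.elim_inr, Pi.zero_apply, mul_zero, Finset.sum_const_zero,
        add_zero]
      rw [dot_spike]
      have := congrFun (QB_pow_diff A X0 (k + 1)) 0
      simpa using this


/-- explicit equivalence with `Fin (2n+1)` -/
def emb (n : ℕ) : ((Fin n × Bool) ⊕ Unit) ≃ Fin (2 * n + 1) where
  toFun x := match x with
    | .inl (i, b) => ⟨2 * i.val + (if b then 1 else 0), by
        have := i.isLt; split <;> omega⟩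
    | .inr _ => ⟨2 * n, by omega⟩
  invFun j :=
    if h : j.val = 2 * n then .inr ()
    else .inl (⟨j.val / 2, by have := j.isLt; omega⟩, decide (j.val % 2 = 1))
  left_inv x := by
    rcases x with ⟨i, b⟩ | u
    · have hi := i.isLt
      rcases b
      all_goals dsimp only
      all_goals rw [dif_neg (by simp; omega)]
      all_goals congr 1
      all_goals refine Prod.ext (Fin.ext ?_) ?_ <;> simp <;> omega
    · simp
  right_inv j := by
    dsimp only
    by_cases h : j.val = 2 * n
    · simp [h]; ext; simp [h]
    · simp [h]
      ext
      simp
      rcases Nat.even_or_odd (j.val) with he | ho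
      · obtain ⟨c, hc⟩ := he
        have : j.val % 2 = 0 := by omega
        simp [this]
        omega
      · obtain ⟨c, hc⟩ := ho
        have : j.val % 2 = 1 := by omega
        simp [this]
        omega

lemma dot_reindex {T : Type*} [Fintype T] [DecidableEq T] {m' : ℕ} (e : T ≃ Fin m')
    (N : Matrix T T ℚ) (c v : Fin m' → ℚ) :
    c ⬝ᵥ ((Matrix.reindex e e N) *ᵥ v) = (fun x => c (e x)) ⬝ᵥ (N *ᵥ fun x => v (e x)) := by
  simp only [dotProduct, Matrix.mulVec]
  rw [← e.sum_comp]
  refine Finset.sum_congr rfl fun a _ => ?_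
  congr 1
  rw [← e.sum_comp]
  refine Finset.sum_congr rfl fun b _ => ?_
  rw [Matrix.reindex_apply, Matrix.submatrix_apply, e.symm_apply_apply, e.symm_apply_apply]


/-- the generator-like matrix on `Fin (2n+1)` -/
def Qt (A : Matrix (Fin n) (Fin n) ℚ) (X0 : Fin n → ℚ) :
    Matrix (Fin (2 * n + 1)) (Fin (2 * n + 1)) ℚ :=
  Matrix.reindex (emb n) (emb n) (Q0 A X0)

lemma Qt_nonneg (A : Matrix (Fin n) (Fin n) ℚ) (X0 : Fin n → ℚ) (i j) :
    0 ≤ Qt A X0 i j := Q0_nonneg A X0 _ _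

def Cq (n : ℕ) : Fin (2 * n + 1) → ℚ :=
  fun j => if (j : ℕ) = 0 then 1 else if (j : ℕ) = 1 then -1 else 0

def Yq (n : ℕ) : Fin (2 * n + 1) → ℚ :=
  fun j => if (j : ℕ) = 2 * n then 1 else 0

lemma emb_inl_val (i : Fin n) (b : Bool) :
    ((emb n) (Sum.inl (i, b)) : ℕ) = 2 * i.val + (if b then 1 else 0) := rfl

lemma emb_inr_val (u : Unit) : ((emb n) (Sum.inr u) : ℕ) = 2 * n := rfl

lemma Cq_emb [NeZero n] (x : (Fin n × Bool) ⊕ Unit) : Cq n ((emb n) x) = cT x := by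
  have hn : 0 < n := Nat.pos_of_ne_zero (NeZero.ne n)
  rcases x with ⟨i, b⟩ | u
  · have hv := emb_inl_val i b
    have hi := i.isLt
    rcases b
    · by_cases h0 : i = 0
      · subst h0; simp [Cq, cT, hv]
      · have : i.val ≠ 0 := fun h => h0 (Fin.ext h)
        simp only [Cq, cT, hv, Sum.elim_inl]
        rw [if_neg (by simpa using by omega), if_neg (by simpa using by omega)]
        rw [if_neg (by simp [h0]), if_neg (by simp [h0])]
    · by_cases h0 : i = 0
      · subst h0; simp [Cq, cT, hv]
      · have : i.val ≠ 0 := fun h => h0 (Fin.ext h)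
        simp only [Cq, cT, hv, Sum.elim_inl]
        rw [if_neg (by simpa using by omega), if_neg (by simpa using by omega)]
        rw [if_neg (by simp [h0]), if_neg (by simp [h0])]
  · have hv := emb_inr_val (n := n) u
    simp only [Cq, cT, hv, Sum.elim_inr]
    rw [if_neg (by omega), if_neg (by omega)]
    rfl

lemma Yq_emb [NeZero n] (x : (Fin n × Bool) ⊕ Unit) :
    Yq n ((emb n) x) = Sum.elim (0 : Fin n × Bool → ℚ) 1 x := by
  have hn : 0 < n := Nat.pos_of_ne_zero (NeZero.ne n)
  rcases x with ⟨i, b⟩ | u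
  · have hv := emb_inl_val i b
    have hi := i.isLt
    simp only [Yq, hv, Sum.elim_inl, Pi.zero_apply]
    rw [if_neg (by split <;> omega)]
  · simp [Yq, emb_inr_val]

lemma keyFin [NeZero n] (A : Matrix (Fin n) (Fin n) ℚ) (X0 : Fin n → ℚ) (hX0 : X0 0 = 0)
    (k : ℕ) :
    Cq n ⬝ᵥ ((Qt A X0) ^ k *ᵥ Yq n) = ((A ^ k) *ᵥ X0) 0 := by
  have hpow : (Qt A X0) ^ k = Matrix.reindex (emb n) (emb n) ((Q0 A X0) ^ k) := by
    rw [Qt, ← Matrix.reindexAlgEquiv_apply ℚ ℚ, ← Matrix.reindexAlgEquiv_apply ℚ ℚ, map_pow]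
  rw [hpow, dot_reindex]
  have h1 : (fun x => Cq n ((emb n) x)) = cT := funext (Cq_emb)
  have h2 : (fun x => Yq n ((emb n) x)) = Sum.elim (0 : Fin n × Bool → ℚ) 1 :=
    funext (Yq_emb)
  rw [h1, h2, keyT A X0 hX0 k]


lemma map_pow_cast {m : ℕ} (M : Matrix (Fin m) (Fin m) ℚ) (k : ℕ) :
    (M.map ((↑) : ℚ → ℝ)) ^ k = (M ^ k).map ((↑) : ℚ → ℝ) := by
  have h := map_pow ((Rat.castHom ℝ).mapMatrix) M k
  simpa [RingHom.mapMatrix_apply] using h.symm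

lemma cast_dot {m : ℕ} (M : Matrix (Fin m) (Fin m) ℚ) (c v : Fin m → ℚ) :
    (fun j => ((c j : ℚ) : ℝ)) ⬝ᵥ (M.map ((↑) : ℚ → ℝ) *ᵥ fun j => ((v j : ℚ) : ℝ))
      = ((c ⬝ᵥ (M *ᵥ v) : ℚ) : ℝ) := by
  simp only [dotProduct, Matrix.mulVec, Matrix.map_apply]
  push_cast
  rfl

lemma dot_exp_tsum {m : ℕ} (M : Matrix (Fin m) (Fin m) ℝ) (c y : Fin m → ℝ) (t : ℝ) :
    c ⬝ᵥ (NormedSpace.exp (t • M) *ᵥ y)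
      = ∑' k : ℕ, (((k.factorial : ℝ))⁻¹ * t ^ k) * (c ⬝ᵥ (M ^ k *ᵥ y)) := by
  letI : SeminormedRing (Matrix (Fin m) (Fin m) ℝ) := Matrix.linftyOpSemiNormedRing
  letI : NormedRing (Matrix (Fin m) (Fin m) ℝ) := Matrix.linftyOpNormedRing
  letI : NormedAlgebra ℝ (Matrix (Fin m) (Fin m) ℝ) := Matrix.linftyOpNormedAlgebra
  let φ₀ : Matrix (Fin m) (Fin m) ℝ →ₗ[ℝ] ℝ :=
    { toFun := fun N => c ⬝ᵥ (N *ᵥ y)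
      map_add' := by
        intro N₁ N₂
        simp [Matrix.add_mulVec, dotProduct_add]
      map_smul' := by
        intro r N
        simp [Matrix.smul_mulVec, dotProduct_smul] }
  let φ : Matrix (Fin m) (Fin m) ℝ →L[ℝ] ℝ := φ₀.toContinuousLinearMap
  have hsum : Summable fun k : ℕ => ((k.factorial : ℝ))⁻¹ • (t • M) ^ k :=
    NormedSpace.expSeries_summable' (𝕂 := ℝ) (t • M)
  have h1 : c ⬝ᵥ (NormedSpace.exp (t • M) *ᵥ y)
      = φ (∑' k : ℕ, ((k.factorial : ℝ))⁻¹ • (t • M) ^ k) := by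
    rw [NormedSpace.exp_eq_tsum ℝ]
    rfl
  rw [h1, φ.map_tsum hsum]
  refine tsum_congr fun k => ?_
  have h2 : (t • M) ^ k = t ^ k • M ^ k := smul_pow t M k
  rw [h2]
  show c ⬝ᵥ ((((k.factorial : ℝ))⁻¹ • (t ^ k • M ^ k)) *ᵥ y) = _
  rw [smul_smul, Matrix.smul_mulVec, dotProduct_smul]
  simp [mul_assoc]

lemma exp_smul_one {m : ℕ} (c : ℝ) :
    NormedSpace.exp (c • (1 : Matrix (Fin m) (Fin m) ℝ)) = Real.exp c • 1 := by
  letI : SeminormedRing (Matrix (Fin m) (Fin m) ℝ) := Matrix.linftyOpSemiNormedRing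
  letI : NormedRing (Matrix (Fin m) (Fin m) ℝ) := Matrix.linftyOpNormedRing
  letI : NormedAlgebra ℝ (Matrix (Fin m) (Fin m) ℝ) := Matrix.linftyOpNormedAlgebra
  have h := NormedSpace.algebraMap_exp_comm (𝕂 := ℝ)
    (𝔸 := Matrix (Fin m) (Fin m) ℝ) c
  rw [Algebra.algebraMap_eq_smul_one, Algebra.algebraMap_eq_smul_one] at h
  rw [Real.exp_eq_exp_ℝ]
  exact h.symm

end ExistPAux

open ExistPAux

/-- Theorem (existP): for any rational `A`, `X₀` with first coordinate zero, and
`C = [1,0,…,0]`, there are positive rationals `γ, λ` and a rational sub-stochastic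
generator matrix `P` of size `2n+1` (non-negative off-diagonal entries, row sums `≤ 0`)
such that `C e^{At} X₀ = γ e^{λ t} (C' e^{Pt} Y₀)` for all `t ≥ 0`, where
`C' = [1,-1,0,…,0]` and `Y₀ = (0,…,0,1)`. -/
theorem existP
    {n : ℕ} [NeZero n] (A : Matrix (Fin n) (Fin n) ℚ)
    (X0 : Fin n → ℚ) (hX0 : X0 0 = 0)
    (C : Fin n → ℝ) (hC : C = fun j => if j = 0 then 1 else 0)
    (C' : Fin (2 * n + 1) → ℝ)
    (hC' : C' = fun j : Fin (2 * n + 1) => if (j : ℕ) = 0 then (1 : ℝ) else if (j : ℕ) = 1 then -1 else 0)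
    (Y0 : Fin (2 * n + 1) → ℝ)
    (hY0 : Y0 = fun j : Fin (2 * n + 1) => if (j : ℕ) = 2 * n then (1 : ℝ) else 0) :
    ∃ γ lam : ℚ, 0 < γ ∧ 0 < lam ∧
      ∃ P : Matrix (Fin (2 * n + 1)) (Fin (2 * n + 1)) ℚ,
        (∀ i j, i ≠ j → 0 ≤ P i j) ∧
        (∀ i, ∑ j, P i j ≤ 0) ∧
        ∀ t : ℝ, 0 ≤ t →
          C ⬝ᵥ (NormedSpace.exp (t • A.map ((↑) : ℚ → ℝ)) *ᵥ fun i => ((X0 i : ℚ) : ℝ)) =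
          (γ : ℝ) * Real.exp ((lam : ℝ) * t) *
            (C' ⬝ᵥ (NormedSpace.exp (t • P.map ((↑) : ℚ → ℝ)) *ᵥ Y0)) := by

  classical
  set lam : ℚ := 1 + ∑ i, ∑ j, Qt A X0 i j with hlam
  have htot : 0 ≤ ∑ i, ∑ j, Qt A X0 i j :=
    Finset.sum_nonneg fun i _ => Finset.sum_nonneg fun j _ => Qt_nonneg A X0 i j
  refine ⟨1, lam, one_pos, by linarith, Qt A X0 - lam • 1, ?_, ?_, ?_⟩
  · intro i j hij
    simp only [Matrix.sub_apply, Matrix.smul_apply, Matrix.one_apply_ne hij, smul_eq_mul,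
      mul_zero, sub_zero]
    exact Qt_nonneg A X0 i j
  · intro i
    have hrow : ∑ j, Qt A X0 i j ≤ ∑ i', ∑ j, Qt A X0 i' j :=
      Finset.single_le_sum (f := fun i' => ∑ j, Qt A X0 i' j)
        (fun i' _ => Finset.sum_nonneg fun j _ => Qt_nonneg A X0 i' j) (Finset.mem_univ i)
    have hone : ∑ j, (lam • (1 : Matrix (Fin (2 * n + 1)) (Fin (2 * n + 1)) ℚ)) i j = lam := by
      simp [Matrix.smul_apply, Matrix.one_apply, Finset.sum_ite_eq]
    have : ∑ j, (Qt A X0 - lam • 1) i j = (∑ j, Qt A X0 i j) - lam := by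
      simp only [Matrix.sub_apply, Finset.sum_sub_distrib, hone]
    rw [this]
    linarith
  · intro t ht
    subst hC hC' hY0
    -- cast the matrix P
    have h0 : ((Qt A X0 - lam • 1).map ((↑) : ℚ → ℝ))
        = (Qt A X0).map ((↑) : ℚ → ℝ) - (lam : ℝ) • 1 := by
      ext i j
      simp only [Matrix.map_apply, Matrix.sub_apply, Matrix.smul_apply, Matrix.one_apply,
        smul_eq_mul]
      split_ifs <;> push_cast <;> ring
    set B := (Qt A X0).map ((↑) : ℚ → ℝ) with hB
    set l : ℝ := (lam : ℝ) with hl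
    have h1 : t • (B - l • 1) = t • B + (-(t * l)) • (1 : Matrix (Fin (2 * n + 1)) (Fin (2 * n + 1)) ℝ) := by
      rw [smul_sub, sub_eq_add_neg, smul_smul, ← neg_smul]
    have hcomm : Commute (t • B)
        ((-(t * l)) • (1 : Matrix (Fin (2 * n + 1)) (Fin (2 * n + 1)) ℝ)) :=
      (Commute.one_right (t • B)).smul_right _
    have h2 : NormedSpace.exp (t • (B - l • 1))
        = NormedSpace.exp (t • B) * (Real.exp (-(t * l)) • 1) := by
      rw [h1, Matrix.exp_add_of_commute _ _ hcomm, exp_smul_one]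
    have h3 : NormedSpace.exp (t • B) * (Real.exp (-(t * l)) • 1)
        = Real.exp (-(t * l)) • NormedSpace.exp (t • B) := by
      rw [mul_smul_comm, mul_one]
    rw [h0, h2, h3]
    -- pull out the scalar
    rw [Matrix.smul_mulVec, dotProduct_smul]
    have hexp : Real.exp (l * t) * Real.exp (-(t * l)) = 1 := by
      rw [← Real.exp_add]
      ring_nf
      exact Real.exp_zero
    have hmain : (fun j : Fin n => if j = 0 then (1:ℝ) else 0) ⬝ᵥ
        (NormedSpace.exp (t • A.map ((↑) : ℚ → ℝ)) *ᵥ fun i => ((X0 i : ℚ) : ℝ))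
        = (fun j : Fin (2 * n + 1) =>
            if (j : ℕ) = 0 then (1 : ℝ) else if (j : ℕ) = 1 then -1 else 0) ⬝ᵥ
          (NormedSpace.exp (t • B) *ᵥ fun j : Fin (2 * n + 1) =>
            if (j : ℕ) = 2 * n then (1 : ℝ) else 0) := by
      rw [dot_exp_tsum, dot_exp_tsum]
      refine tsum_congr fun k => ?_
      congr 1
      have hCc : (fun j : Fin n => if j = 0 then (1:ℝ) else 0)
          = fun j => (((if j = 0 then (1:ℚ) else 0) : ℚ) : ℝ) := by
        funext j; split_ifs <;> simp
      have hC'c : (fun j : Fin (2 * n + 1) =>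
            if (j : ℕ) = 0 then (1 : ℝ) else if (j : ℕ) = 1 then -1 else 0)
          = fun j => ((Cq n j : ℚ) : ℝ) := by
        funext j; simp only [Cq]; split_ifs <;> simp
      have hYc : (fun j : Fin (2 * n + 1) => if (j : ℕ) = 2 * n then (1 : ℝ) else 0)
          = fun j => ((Yq n j : ℚ) : ℝ) := by
        funext j; simp only [Yq]; split_ifs <;> simp
      rw [hCc, hC'c, hYc, hB, map_pow_cast, map_pow_cast, cast_dot, cast_dot]
      congr 1
      have hL : (fun j : Fin n => if j = 0 then (1:ℚ) else 0) ⬝ᵥ (A ^ k *ᵥ X0)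
          = ((A ^ k) *ᵥ X0) 0 := by
        simp [dotProduct, Finset.sum_ite_eq']
      rw [hL, keyFin A X0 hX0 k]
    rw [hmain, smul_eq_mul, Rat.cast_one, one_mul, ← mul_assoc, hexp, one_mul]
end

section
/- Let Q^a and Q^b = Q^a + K be (2n+2)×(2n+2) real matrices where K has all rows zero except the first, which equals (-r, r, 0, ..., 0) for some r ∈ ℝ. Let Ȳ₀ = (0,...,0,1)ᵀ and C̄ = (1, -1, 0, ..., 0). If C̄·(Q^a)^j·Ȳ₀ = 0 for all j < k₀, then (Q^b)^k·Ȳ₀ = (Q^a)^k·Ȳ₀ for all k ≤ k₀; moreover (Q^b)^{k₀+1}·Ȳ₀ = (Q^a)^{k₀+1}·Ȳ₀ − r·(C̄·(Q^a)^{k₀}·Ȳ₀)·e₁, where e₁ is the first standard basis vector. -/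
open Matrix

lemma K_mulVec {n : ℕ} (K : Matrix (Fin (2 * n + 2)) (Fin (2 * n + 2)) ℝ) (r : ℝ)
    (hK : K = fun i j : Fin (2 * n + 2) => if (i : ℕ) = 0 then
        (if (j : ℕ) = 0 then -r else if (j : ℕ) = 1 then r else 0) else (0 : ℝ))
    (Cb : Fin (2 * n + 2) → ℝ)
    (hCb : Cb = fun j : Fin (2 * n + 2) => if (j : ℕ) = 0 then (1 : ℝ) else if (j : ℕ) = 1 then -1 else 0)
    (v : Fin (2 * n + 2) → ℝ) :
    K *ᵥ v = (-(r * (Cb ⬝ᵥ v))) • (Pi.single (0 : Fin (2 * n + 2)) (1 : ℝ) : Fin (2 * n + 2) → ℝ) := by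
  subst hK hCb
  ext i
  simp only [mulVec, dotProduct, Pi.smul_apply]
  by_cases hi : (i : ℕ) = 0
  · have h0 : i = 0 := by ext; simpa using hi
    subst h0
    rw [Pi.single_eq_same]
    have h01 : ((0 : Fin (2 * n + 2)) : ℕ) = 0 := rfl
    have key : ∀ j : Fin (2 * n + 2),
        (if (j : ℕ) = 0 then -r else if (j : ℕ) = 1 then r else 0) * v j
        = -(r * ((if (j : ℕ) = 0 then (1:ℝ) else if (j : ℕ) = 1 then -1 else 0) * v j)) := by
      intro j
      by_cases h0 : (j : ℕ) = 0
      · simp only [h0, if_true]; ring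
      · by_cases h1 : (j : ℕ) = 1
        · norm_num [h0, h1]
        · simp only [h0, h1, if_false]; ring
    simp only [h01, if_true, key, smul_eq_mul, mul_one]
    rw [Finset.sum_neg_distrib, ← Finset.mul_sum]
  · have hne : i ≠ (0 : Fin (2 * n + 2)) := by
      intro hh; apply hi; rw [hh]; rfl
    rw [Pi.single_eq_of_ne hne]
    simp [hi]

/-- Key computation in Proposition (selection_r): if the first `k₀` "moments"
`C̄ (Qᵃ)ʲ Ȳ₀` vanish, then `(Qᵇ)ᵏ Ȳ₀ = (Qᵃ)ᵏ Ȳ₀` for `k ≤ k₀`, and the `(k₀+1)`-st powers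
differ by `r (C̄ (Qᵃ)^{k₀} Ȳ₀) e₁`. -/
theorem perturbed_generator_powers
    {n : ℕ} (Qa K Qb : Matrix (Fin (2 * n + 2)) (Fin (2 * n + 2)) ℝ) (r : ℝ)
    (hK : K = fun i j : Fin (2 * n + 2) => if (i : ℕ) = 0 then
        (if (j : ℕ) = 0 then -r else if (j : ℕ) = 1 then r else 0) else (0 : ℝ))
    (hQb : Qb = Qa + K)
    (Y0 : Fin (2 * n + 2) → ℝ) (hY0 : Y0 = fun j : Fin (2 * n + 2) => if (j : ℕ) = 2 * n + 1 then (1 : ℝ) else 0)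
    (Cb : Fin (2 * n + 2) → ℝ)
    (hCb : Cb = fun j : Fin (2 * n + 2) => if (j : ℕ) = 0 then (1 : ℝ) else if (j : ℕ) = 1 then -1 else 0)
    (k0 : ℕ) (h : ∀ j < k0, Cb ⬝ᵥ ((Qa ^ j) *ᵥ Y0) = 0) :
    (∀ k ≤ k0, (Qb ^ k) *ᵥ Y0 = (Qa ^ k) *ᵥ Y0) ∧
    (Qb ^ (k0 + 1)) *ᵥ Y0 =
      (Qa ^ (k0 + 1)) *ᵥ Y0 -
        (r * (Cb ⬝ᵥ ((Qa ^ k0) *ᵥ Y0))) • (Pi.single (0 : Fin (2 * n + 2)) (1 : ℝ) : Fin (2 * n + 2) → ℝ) := by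
  have main : ∀ k ≤ k0, (Qb ^ k) *ᵥ Y0 = (Qa ^ k) *ᵥ Y0 := by
    intro k hk
    induction k with
    | zero => rfl
    | succ m ih =>
      have hm : m ≤ k0 := Nat.le_of_succ_le hk
      have ihm := ih hm
      have : (Qb ^ (m + 1)) *ᵥ Y0 = Qb *ᵥ ((Qb ^ m) *ᵥ Y0) := by
        rw [pow_succ', mulVec_mulVec]
      rw [this, ihm, hQb, add_mulVec, K_mulVec K r hK Cb hCb,
        h m (Nat.lt_of_succ_le hk), mul_zero, neg_zero, zero_smul, add_zero,
        mulVec_mulVec, ← pow_succ']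
  refine ⟨main, ?_⟩
  have : (Qb ^ (k0 + 1)) *ᵥ Y0 = Qb *ᵥ ((Qb ^ k0) *ᵥ Y0) := by
    rw [pow_succ', mulVec_mulVec]
  rw [this, main k0 le_rfl, hQb, add_mulVec, K_mulVec K r hK Cb hCb,
    mulVec_mulVec, ← pow_succ', neg_smul, ← sub_eq_add_neg]
end
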